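/- arXiv:math/0211080 — 3 statements merged into one kernel-verified Lean document; each statement's English description precedes it below -/
import Mathlib

section
/- Let {X,T,U,V,Y} be a basis of ℝ^5 and c ∈ ℝ. Let g be the symmetric bilinear form with g(X,X) = c, g(T,T) = 1, g(U,V) = 1, g(X,Y) = 1, all other products 0, and let R be the 4-linear form whose only nonzero components, up to the symmetries R(x_1,x_2,x_3,x_4) = −R(x_2,x_1,x_3,x_4) = −R(x_1,x_2,x_4,x_3) = R(x_3,x_4,x_1,x_2), are R(X,U,U,X) = 1 and R(X,U,T,X) = 1. Then for every pair f_1, f_2 ∈ ℝ^5 with g(f_1,f_1) = ±1, g(f_2,f_2) = ±1 and g(f_1,f_2) = 0, the skew-symmetric curvature operator satisfies ℛ(f_1,f_2)³ = 0; moreover there exists such a pair with ℛ(f_1,f_2)² ≠ 0. -/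
/-!
Fix `f₁, f₂` and write `xᵢ` for the coordinates of `x` in the basis `b = (X, T, U, V, Y)`. The vanishing conditions and the
antisymmetry in the last two slots force `R(f₁, f₂, y, z) = β e⁰∧e¹(y, z) + α e⁰∧e²(y, z)` with
`β = R(f₁, f₂, X, T)` and `α = R(f₁, f₂, X, U)`. Since `g(x, Y) = x₀`, `g(x, T) = x₁` and
`g(x, V) = x₂`, the operator `ℛ` has image in `{x₀ = x₂ = 0}`, maps that space into
`{x₀ = x₁ = x₂ = 0}`, and kills the latter, so `ℛ³ = 0`. Moreover `g(ℛ² X, X) = -β²`, and the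
orthonormal pair `f₁ = X + (1 - c)/2 Y`, `f₂ = U + V/2` has `β = -1`.
-/

open Module

theorem MultilinearMap.map_eq_zero_of_forall_basis {K M N ι κ : Type*} [CommSemiring K]
    [AddCommMonoid M] [Module K M] [AddCommMonoid N] [Module K N]
    [Fintype ι] [DecidableEq ι] [Fintype κ]
    (f : MultilinearMap K (fun _ : ι => M) N) (b : Basis κ K M) (m : ι → M)
    (h : ∀ r : ι → κ, (∀ i, b.repr (m i) (r i) ≠ 0) → f (fun i => b (r i)) = 0) : f m = 0 := by
  rw [show m = fun i => ∑ k, b.repr (m i) k • b k from funext fun i => (b.sum_repr (m i)).symm,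
    f.map_sum]
  refine Finset.sum_eq_zero fun r _ => ?_
  rw [f.map_smul_univ]
  by_cases hr : ∀ i, b.repr (m i) (r i) ≠ 0
  · rw [h r hr, smul_zero]
  · obtain ⟨i, hi⟩ := not_forall_not.mp hr
    rw [Finset.prod_eq_zero (Finset.mem_univ i) hi, zero_smul]

section Bilinear

variable {K M N ι : Type*} [CommSemiring K] [AddCommMonoid M] [Module K M] [AddCommMonoid N]
  [Module K N]

theorem LinearMap.apply_eq_sum_repr_mul [Fintype ι] (g : M →ₗ[K] N →ₗ[K] K) (b : Basis ι K M)
    (x : M) (y : N) : g x y = ∑ i, b.repr x i * g (b i) y := by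
  conv_lhs => rw [← b.sum_repr x]
  simp only [map_sum, map_smul, LinearMap.sum_apply, LinearMap.smul_apply, smul_eq_mul]

theorem LinearMap.separatingLeft_of_dual (g : M →ₗ[K] N →ₗ[K] K) (b : Basis ι K M) (d : ι → N)
    (hd : ∀ x i, g x (d i) = b.repr x i) : g.SeparatingLeft := fun x hx =>
  b.repr.injective <| by ext i; rw [← hd, hx, map_zero, Finsupp.zero_apply]

end Bilinear

section SkewForm

variable {K M : Type*} [CommRing K] [AddCommGroup M] [Module K M]

/-- `β e⁰∧e¹ + α e⁰∧e²`, where `eⁱ` are the coordinate functionals of `b`. -/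
noncomputable def Module.Basis.skewForm (b : Basis (Fin 5) K M) (β α : K) (y z : M) : K :=
  β * (b.repr y 0 * b.repr z 1 - b.repr y 1 * b.repr z 0) +
    α * (b.repr y 0 * b.repr z 2 - b.repr y 2 * b.repr z 0)

namespace MultilinearMap

def lastPairForm (R : MultilinearMap K (fun _ : Fin 4 => M) K) (u v : M) :
    M →ₗ[K] M →ₗ[K] K :=
  LinearMap.mk₂ K (fun y z => R ![u, v, y, z])
    (fun y y' z => ((R.curryLeft u).curryLeft v).cons_add ![z] y y')
    (fun c y z => ((R.curryLeft u).curryLeft v).cons_smul ![z] c y)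
    (fun y z z' => (((R.curryLeft u).curryLeft v).curryLeft y).cons_add ![] z z')
    (fun c y z => (((R.curryLeft u).curryLeft v).curryLeft y).cons_smul ![] c z)

variable (R : MultilinearMap K (fun _ : Fin 4 => M) K) (b : Basis (Fin 5) K M)

@[simp]
theorem lastPairForm_apply (u v y z : M) : R.lastPairForm u v y z = R ![u, v, y, z] := rfl

theorem apply_basis_eq_zero
    (hzero : ∀ i₁ i₂ j k : Fin 5, ¬((j = 0 ∧ (k = 1 ∨ k = 2)) ∨ (k = 0 ∧ (j = 1 ∨ j = 2))) →
      R ![b i₁, b i₂, b j, b k] = 0)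
    {j k : Fin 5} (hjk : ¬((j = 0 ∧ (k = 1 ∨ k = 2)) ∨ (k = 0 ∧ (j = 1 ∨ j = 2)))) (u v : M) :
    R ![u, v, b j, b k] = 0 := by
  refine R.map_eq_zero_of_forall_basis b _ fun r hr => ?_
  have hr2 : j = r 2 := by_contra fun h => hr 2 (by simp [h])
  have hr3 : k = r 3 := by_contra fun h => hr 3 (by simp [h])
  convert hzero (r 0) (r 1) j k hjk using 2
  ext i; fin_cases i <;> simp [hr2, hr3]

theorem apply_eq_skewForm
    (hskew : ∀ x₁ x₂ x₃ x₄, R ![x₁, x₂, x₃, x₄] = -R ![x₁, x₂, x₄, x₃])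
    (hzero : ∀ i₁ i₂ j k : Fin 5, ¬((j = 0 ∧ (k = 1 ∨ k = 2)) ∨ (k = 0 ∧ (j = 1 ∨ j = 2))) →
      R ![b i₁, b i₂, b j, b k] = 0)
    (u v y z : M) :
    R ![u, v, y, z] = b.skewForm (R ![u, v, b 0, b 1]) (R ![u, v, b 0, b 2]) y z := by
  rw [← lastPairForm_apply, ← LinearMap.sum_repr_mul_repr_mul b b]
  simp only [lastPairForm_apply, smul_eq_mul, zero_mul, mul_zero, implies_true,
    Finsupp.sum_fintype, Fin.sum_univ_five, Fin.reduceEq, or_self, and_false, false_and,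
    not_false_eq_true, R.apply_basis_eq_zero b hzero, add_zero, zero_ne_one, zero_add,
    hskew u v (b 1) (b 0), mul_neg, one_ne_zero, or_false, and_true, or_true,
    hskew u v (b 2) (b 0), and_self, Basis.skewForm]
  ring

end MultilinearMap

section SkewOperator

variable (b : Basis (Fin 5) K M) {g : M →ₗ[K] M →ₗ[K] K} {Rop : Module.End K M} {β α : K}

theorem repr_apply_zero_of_skewForm (hRop : ∀ y z, g (Rop y) z = b.skewForm β α y z)
    (hg4 : ∀ x, g x (b 4) = b.repr x 0) (y : M) : b.repr (Rop y) 0 = 0 := by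
  rw [← hg4, hRop]; simp [Basis.skewForm]

theorem repr_apply_one_of_skewForm (hRop : ∀ y z, g (Rop y) z = b.skewForm β α y z)
    (hg1 : ∀ x, g x (b 1) = b.repr x 1) (y : M) : b.repr (Rop y) 1 = β * b.repr y 0 := by
  rw [← hg1, hRop]; simp [Basis.skewForm]

theorem repr_apply_two_of_skewForm (hRop : ∀ y z, g (Rop y) z = b.skewForm β α y z)
    (hg3 : ∀ x, g x (b 3) = b.repr x 2) (y : M) : b.repr (Rop y) 2 = 0 := by
  rw [← hg3, hRop]; simp [Basis.skewForm]

theorem pow_three_eq_zero_of_skewForm (hRop : ∀ y z, g (Rop y) z = b.skewForm β α y z)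
    (hsep : g.SeparatingLeft) (hg4 : ∀ x, g x (b 4) = b.repr x 0)
    (hg1 : ∀ x, g x (b 1) = b.repr x 1) (hg3 : ∀ x, g x (b 3) = b.repr x 2) : Rop ^ 3 = 0 := by
  ext1 y
  refine hsep _ fun z => ?_
  have h0 := repr_apply_zero_of_skewForm b hRop hg4 (Rop y)
  have h1 : b.repr (Rop (Rop y)) 1 = 0 := by
    rw [repr_apply_one_of_skewForm b hRop hg1, repr_apply_zero_of_skewForm b hRop hg4, mul_zero]
  have h2 := repr_apply_two_of_skewForm b hRop hg3 (Rop y)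
  simp [pow_succ, hRop, Basis.skewForm, h0, h1, h2]

theorem apply_pow_two_basis_zero_of_skewForm (hRop : ∀ y z, g (Rop y) z = b.skewForm β α y z)
    (hg1 : ∀ x, g x (b 1) = b.repr x 1) (hg3 : ∀ x, g x (b 3) = b.repr x 2) :
    g ((Rop ^ 2) (b 0)) (b 0) = -β ^ 2 := by
  rw [pow_two, Module.End.mul_apply, hRop]
  simp [Basis.skewForm, repr_apply_one_of_skewForm b hRop hg1,
    repr_apply_two_of_skewForm b hRop hg3, sq]

theorem pow_two_ne_zero_of_skewForm [NoZeroDivisors K] (hβ : β ≠ 0)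
    (hRop : ∀ y z, g (Rop y) z = b.skewForm β α y z)
    (hg1 : ∀ x, g x (b 1) = b.repr x 1) (hg3 : ∀ x, g x (b 3) = b.repr x 2) : Rop ^ 2 ≠ 0 := by
  intro h
  have := apply_pow_two_basis_zero_of_skewForm b hRop hg1 hg3
  rw [h, LinearMap.zero_apply, map_zero, LinearMap.zero_apply, zero_eq_neg] at this
  exact hβ (pow_eq_zero_iff two_ne_zero |>.mp this)

end SkewOperator

end SkewForm

theorem orthonormal_pair_of_apply_basis {M : Type*} [AddCommGroup M] [Module ℝ M]
    (b : Basis (Fin 5) ℝ M) {g : M →ₗ[ℝ] M →ₗ[ℝ] ℝ} (c : ℝ)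
    (hg0 : ∀ x, g x (b 0) = b.repr x 0 * c + b.repr x 4) (hg2 : ∀ x, g x (b 2) = b.repr x 3)
    (hg3 : ∀ x, g x (b 3) = b.repr x 2) (hg4 : ∀ x, g x (b 4) = b.repr x 0) :
    let f₁ := b 0 + ((1 - c) / 2) • b 4
    let f₂ := b 2 + (1 / 2 : ℝ) • b 3
    g f₁ f₁ = 1 ∧ g f₂ f₂ = 1 ∧ g f₁ f₂ = 0 := by
  refine ⟨?_, ?_, ?_⟩
  · simp only [map_add, map_smul, LinearMap.add_apply, LinearMap.smul_apply, hg0, hg4,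
      Basis.repr_self, Finsupp.single_eq_same, ne_eq, Fin.reduceEq, not_false_eq_true,
      Finsupp.single_eq_of_ne, smul_eq_mul, mul_one, mul_zero, add_zero]
    ring
  · simp only [map_add, map_smul, LinearMap.add_apply, LinearMap.smul_apply, hg2, hg3,
      Basis.repr_self, Finsupp.single_eq_same, ne_eq, Fin.reduceEq, not_false_eq_true,
      Finsupp.single_eq_of_ne, smul_eq_mul, mul_one, mul_zero, add_zero, zero_add]
    ring
  · simp [hg2, hg3]

theorem ip_nilpotent_order_three_R5_general
    (b : Module.Basis (Fin 5) ℝ (Fin 5 → ℝ)) (c : ℝ)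
    (g : (Fin 5 → ℝ) →ₗ[ℝ] (Fin 5 → ℝ) →ₗ[ℝ] ℝ)
    (hgsym : ∀ v w, g v w = g w v)
    (hgXX : g (b 0) (b 0) = c)
    (hgTT : g (b 1) (b 1) = 1)
    (hgUV : g (b 2) (b 3) = 1)
    (hgXY : g (b 0) (b 4) = 1)
    (hg0 : ∀ i j : Fin 5,
      ¬((i = 0 ∧ j = 0) ∨ (i = 1 ∧ j = 1) ∨ (i = 2 ∧ j = 3) ∨ (i = 3 ∧ j = 2) ∨
        (i = 0 ∧ j = 4) ∨ (i = 4 ∧ j = 0)) →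
      g (b i) (b j) = 0)
    (R : MultilinearMap ℝ (fun _ : Fin 4 => (Fin 5 → ℝ)) ℝ)
    (hsym2 : ∀ x₁ x₂ x₃ x₄, R ![x₁, x₂, x₃, x₄] = -R ![x₁, x₂, x₄, x₃])
    (hsym3 : ∀ x₁ x₂ x₃ x₄, R ![x₁, x₂, x₃, x₄] = R ![x₃, x₄, x₁, x₂])
    (hval2 : R ![b 0, b 2, b 1, b 0] = 1)
    (hvanish : ∀ i₁ i₂ i₃ i₄ : Fin 5,
      ¬(∃ w₁ w₂ : Fin 5,
        ((i₁ = 0 ∧ i₂ = w₁) ∨ (i₂ = 0 ∧ i₁ = w₁)) ∧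
        ((i₃ = 0 ∧ i₄ = w₂) ∨ (i₄ = 0 ∧ i₃ = w₂)) ∧
        ((w₁ = 2 ∧ w₂ = 2) ∨ (w₁ = 2 ∧ w₂ = 1) ∨ (w₁ = 1 ∧ w₂ = 2))) →
      R ![b i₁, b i₂, b i₃, b i₄] = 0) :
    (∀ f₁ f₂ : Fin 5 → ℝ,
      (g f₁ f₁ = 1 ∨ g f₁ f₁ = -1) → (g f₂ f₂ = 1 ∨ g f₂ f₂ = -1) → g f₁ f₂ = 0 →
      ∀ Rop : Module.End ℝ (Fin 5 → ℝ),
        (∀ y z, g (Rop y) z = R ![f₁, f₂, y, z]) → Rop ^ 3 = 0) ∧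
    (∃ f₁ f₂ : Fin 5 → ℝ,
      (g f₁ f₁ = 1 ∨ g f₁ f₁ = -1) ∧ (g f₂ f₂ = 1 ∨ g f₂ f₂ = -1) ∧ g f₁ f₂ = 0 ∧
      ∀ Rop : Module.End ℝ (Fin 5 → ℝ),
        (∀ y z, g (Rop y) z = R ![f₁, f₂, y, z]) → Rop ^ 2 ≠ 0) := by
  have hexp (x : Fin 5 → ℝ) (j : Fin 5) := g.apply_eq_sum_repr_mul b x (b j)
  have hgb0 (x) : g x (b 0) = b.repr x 0 * c + b.repr x 4 := by
    rw [hexp]; simp [Fin.sum_univ_five, hgXX, hg0, hgsym (b 4), hgXY]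
  have hgb1 (x) : g x (b 1) = b.repr x 1 := by rw [hexp]; simp [Fin.sum_univ_five, hgTT, hg0]
  have hgb2 (x) : g x (b 2) = b.repr x 3 := by
    rw [hexp]; simp [Fin.sum_univ_five, hg0, hgsym (b 3), hgUV]
  have hgb3 (x) : g x (b 3) = b.repr x 2 := by rw [hexp]; simp [Fin.sum_univ_five, hgUV, hg0]
  have hgb4 (x) : g x (b 4) = b.repr x 0 := by rw [hexp]; simp [Fin.sum_univ_five, hgXY, hg0]
  have hsep : g.SeparatingLeft := g.separatingLeft_of_dual b ![b 4, b 1, b 3, b 2, b 0 - c • b 4]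
    fun x i => by fin_cases i <;> simp [hgb0, hgb1, hgb2, hgb3, hgb4, mul_comm]
  have hR := R.apply_eq_skewForm b hsym2 fun i₁ i₂ j k hjk =>
    hvanish i₁ i₂ j k fun ⟨_, _, _, hpair, hw⟩ => hjk (by omega)
  refine ⟨fun f₁ f₂ _ _ _ Rop hRop => pow_three_eq_zero_of_skewForm b
    (fun y z => (hRop y z).trans (hR f₁ f₂ y z)) hsep hgb4 hgb1 hgb3, ?_⟩
  obtain ⟨hf₁, hf₂, hf₁₂⟩ := orthonormal_pair_of_apply_basis b c hgb0 hgb2 hgb3 hgb4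
  set f₁ := b 0 + ((1 - c) / 2) • b 4
  set f₂ := b 2 + (1 / 2 : ℝ) • b 3
  have hβ : R ![f₁, f₂, b 0, b 1] = -1 :=
    calc R ![f₁, f₂, b 0, b 1]
        = b.skewForm (R ![b 0, b 1, b 0, b 1]) (R ![b 0, b 1, b 0, b 2]) f₁ f₂ := by
          rw [hsym3, hR]
      _ = R ![b 0, b 1, b 0, b 2] := by simp [f₁, f₂, Basis.skewForm]
      _ = -1 := by rw [hsym3, hsym2, hval2]
  exact ⟨f₁, f₂, .inl hf₁, .inl hf₂, hf₁₂, fun Rop hRop => pow_two_ne_zero_of_skewForm b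
    (by rw [hβ]; norm_num) (fun y z => (hRop y z).trans (hR f₁ f₂ y z)) hgb1 hgb3⟩

/-- for the inner product with `g(X,X) = c`, `g(T,T) = 1`,
`g(U,V) = g(X,Y) = 1` on `ℝ⁵` (basis `X = b 0`, `T = b 1`, `U = b 2`, `V = b 3`,
`Y = b 4`) and the 4-linear form with `R(X,U,U,X) = R(X,U,T,X) = 1` as its only nonzero
components up to the usual symmetries, the skew-symmetric curvature operator satisfies
`ℛ(f₁,f₂)³ = 0` for every orthonormal pair `(f₁,f₂)`, and `ℛ(f₁,f₂)² ≠ 0` for some such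
pair. -/
theorem ip_nilpotent_order_three_R5
    (b : Module.Basis (Fin 5) ℝ (Fin 5 → ℝ)) (c : ℝ)
    (g : (Fin 5 → ℝ) →ₗ[ℝ] (Fin 5 → ℝ) →ₗ[ℝ] ℝ)
    (hgsym : ∀ v w, g v w = g w v)
    (hgXX : g (b 0) (b 0) = c)
    (hgTT : g (b 1) (b 1) = 1)
    (hgUV : g (b 2) (b 3) = 1)
    (hgXY : g (b 0) (b 4) = 1)
    (hg0 : ∀ i j : Fin 5,
      ¬((i = 0 ∧ j = 0) ∨ (i = 1 ∧ j = 1) ∨ (i = 2 ∧ j = 3) ∨ (i = 3 ∧ j = 2) ∨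
        (i = 0 ∧ j = 4) ∨ (i = 4 ∧ j = 0)) →
      g (b i) (b j) = 0)
    (R : MultilinearMap ℝ (fun _ : Fin 4 => (Fin 5 → ℝ)) ℝ)
    (hsym1 : ∀ x₁ x₂ x₃ x₄, R ![x₁, x₂, x₃, x₄] = -R ![x₂, x₁, x₃, x₄])
    (hsym2 : ∀ x₁ x₂ x₃ x₄, R ![x₁, x₂, x₃, x₄] = -R ![x₁, x₂, x₄, x₃])
    (hsym3 : ∀ x₁ x₂ x₃ x₄, R ![x₁, x₂, x₃, x₄] = R ![x₃, x₄, x₁, x₂])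
    (hval1 : R ![b 0, b 2, b 2, b 0] = 1)
    (hval2 : R ![b 0, b 2, b 1, b 0] = 1)
    (hvanish : ∀ i₁ i₂ i₃ i₄ : Fin 5,
      ¬(∃ w₁ w₂ : Fin 5,
        ((i₁ = 0 ∧ i₂ = w₁) ∨ (i₂ = 0 ∧ i₁ = w₁)) ∧
        ((i₃ = 0 ∧ i₄ = w₂) ∨ (i₄ = 0 ∧ i₃ = w₂)) ∧
        ((w₁ = 2 ∧ w₂ = 2) ∨ (w₁ = 2 ∧ w₂ = 1) ∨ (w₁ = 1 ∧ w₂ = 2))) →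
      R ![b i₁, b i₂, b i₃, b i₄] = 0) :
    (∀ f₁ f₂ : Fin 5 → ℝ,
      (g f₁ f₁ = 1 ∨ g f₁ f₁ = -1) → (g f₂ f₂ = 1 ∨ g f₂ f₂ = -1) → g f₁ f₂ = 0 →
      ∀ Rop : Module.End ℝ (Fin 5 → ℝ),
        (∀ y z, g (Rop y) z = R ![f₁, f₂, y, z]) → Rop ^ 3 = 0) ∧
    (∃ f₁ f₂ : Fin 5 → ℝ,
      (g f₁ f₁ = 1 ∨ g f₁ f₁ = -1) ∧ (g f₂ f₂ = 1 ∨ g f₂ f₂ = -1) ∧ g f₁ f₂ = 0 ∧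
      ∀ Rop : Module.End ℝ (Fin 5 → ℝ),
        (∀ y z, g (Rop y) z = R ![f₁, f₂, y, z]) → Rop ^ 2 ≠ 0) :=
  ip_nilpotent_order_three_R5_general b c g hgsym hgXX hgTT hgUV hgXY hg0 R hsym2 hsym3 hval2
    hvanish
end

section
/- Let ℓ ≥ 2, let {X, T, U_2,…,U_{ℓ+1}, V_2,…,V_{ℓ+1}, Y} be a basis of ℝ^{2ℓ+3}, and let c ∈ ℝ. Let g be the symmetric bilinear form with g(X,X) = c, g(X,Y) = 1, g(T,T) = 1, g(U_a,V_b) = δ_{ab}, all other products 0, and let R be the 4-linear form whose only nonzero components, up to the symmetries R(x_1,x_2,x_3,x_4) = −R(x_2,x_1,x_3,x_4) = −R(x_1,x_2,x_4,x_3) = R(x_3,x_4,x_1,x_2), are R(X,U_2,U_2,X) = R(X,T,U_2,X) = 1 and, for 2 ≤ a ≤ ℓ, R(X,U_{a+1},U_{a+1},X) = R(X,U_{a+1},U_a,X) = R(X,U_{a+1},V_a,X) = 1. Then for every pair f_1, f_2 with g(f_1,f_1) = ±1, g(f_2,f_2) = ±1 and g(f_1,f_2) = 0, the skew-symmetric curvature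 operator satisfies ℛ(f_1,f_2)³ = 0; moreover there exists such a pair with ℛ(f_1,f_2)² ≠ 0. -/
/-!
Every component of `R` allowed to be nonzero has `X` in both slot pairs. So, for `ℛ = ℛ(f₁, f₂)`,
`g(ℛu, v) = 0` whenever `u, v` have no `X`-coordinate, i.e. lie in the hyperplane `Y^⊥`, and
`g(ℛu, Y) = 0`, i.e. `ℛ` maps into `Y^⊥`. A skew-adjoint operator with these two properties
satisfies `ℛ³ = 0`. For the second claim take `f₁ = X + ((1 - c)/2) Y` and
`f₂ = U_{ℓ+1} + ½ V_{ℓ+1}`: the `Y`- and `V_{ℓ+1}`-parts do not contribute to `R`, and the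
components `R(X, U_{ℓ+1}, U_ℓ, X) = R(X, U_{ℓ+1}, V_ℓ, X) = 1` give `g(ℛ²X, X) = -2`.
-/

section General

variable {K V : Type*} [CommRing K] [AddCommGroup V] [Module K V]

/-- Write `z = (z - φ z • X) + φ z • X`: the first part pairs to zero with `A³u` because it and
`A²u` lie in `ker φ`, and `g(A³u, X) = -g(A²u, AX)` vanishes because `Au, AX ∈ ker φ`. -/
theorem LinearMap.IsSkewAdjoint.pow_three_eq_zero {g : LinearMap.BilinForm K V}
    (hg : g.SeparatingLeft) {A : Module.End K V} (hA : g.IsSkewAdjoint A) (φ : V →ₗ[K] K)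
    {X : V} (hX : φ X = 1) (hrange : ∀ y, φ (A y) = 0)
    (hker : ∀ u v, φ u = 0 → φ v = 0 → g (A u) v = 0) : A ^ 3 = 0 := by
  ext u
  refine hg _ fun z => ?_
  have hz : z = (z - φ z • X) + φ z • X := by abel
  have hz' : φ (z - φ z • X) = 0 := by simp [hX]
  have hAX : g (A (A (A u))) X = 0 := by
    rw [hA, Pi.neg_apply, map_neg, hker _ _ (hrange _) (hrange _), neg_zero]
  rw [pow_succ, pow_two, Module.End.mul_apply, Module.End.mul_apply, hz, map_add, map_smul,
    hker _ _ (hrange _) hz', hAX, smul_zero, add_zero]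

theorem LinearMap.BilinForm.apply_basis_eq_sum_of_orthogonal {ι : Type*} [Fintype ι]
    (g : LinearMap.BilinForm K V) (b : Module.Basis ι K V) (s : Finset ι) {j : ι}
    (h : ∀ k ∉ s, g (b k) (b j) = 0) (w : V) :
    g w (b j) = ∑ k ∈ s, b.repr w k * g (b k) (b j) := by
  conv_lhs => rw [← b.sum_repr w]
  simp only [map_sum, map_smul, LinearMap.sum_apply, LinearMap.smul_apply, smul_eq_mul]
  exact (Finset.sum_subset (Finset.subset_univ s) fun k _ hk => by rw [h k hk, mul_zero]).symm

theorem MultilinearMap.eq_zero_of_forall_basis {ι κ M N : Type*} [Fintype ι] [DecidableEq ι]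
    [Fintype κ] [AddCommGroup M] [Module K M] [AddCommGroup N] [Module K N]
    (f : MultilinearMap K (fun _ : ι => M) N) (b : Module.Basis κ K M) (x : ι → M)
    (h : ∀ p : ι → κ, (∀ i, b.repr (x i) (p i) ≠ 0) → f (fun i => b (p i)) = 0) : f x = 0 := by
  have hx : x = fun i => ∑ k, b.repr (x i) k • b k := funext fun i => (b.sum_repr (x i)).symm
  rw [hx, f.map_sum]
  refine Finset.sum_eq_zero fun p _ => ?_
  rw [f.map_smul_univ]
  by_cases hp : ∃ i, b.repr (x i) (p i) = 0
  · obtain ⟨i, hi⟩ := hp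
    rw [Finset.prod_eq_zero (Finset.mem_univ i) hi, zero_smul]
  · rw [h p fun i hi => hp ⟨i, hi⟩, smul_zero]

theorem MultilinearMap.map_vec4_add_smul_add_smul (R : MultilinearMap K (fun _ : Fin 4 => V) K)
    (x x' y y' z w : V) (s t : K) :
    R ![x + s • x', y + t • y', z, w] =
      R ![x, y, z, w] + t * R ![x, y', z, w] + s * R ![x', y, z, w] +
        s * t * R ![x', y', z, w] := by
  have curry₁ : ∀ x₁ x₂ x₃ x₄ : V, R ![x₁, x₂, x₃, x₄] = R.curryLeft x₁ ![x₂, x₃, x₄] :=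
    fun _ _ _ _ => rfl
  have curry₂ : ∀ (S : MultilinearMap K (fun _ : Fin 3 => V) K) (x₂ x₃ x₄ : V),
      S ![x₂, x₃, x₄] = S.curryLeft x₂ ![x₃, x₄] := fun _ _ _ _ => rfl
  simp only [curry₁, map_add, map_smul, add_apply, smul_apply, smul_eq_mul]
  simp only [curry₂, map_add, map_smul, add_apply, smul_apply, smul_eq_mul]
  ring

end General

namespace IvanovPetrova

/-- The index patterns of the entries of `g` and `R` that the hypotheses do not force to vanish. -/
def GramSupport (l i j : ℕ) : Prop :=
  (i = 0 ∧ j = 0) ∨ (i = 0 ∧ j = 2 * l + 2) ∨ (j = 0 ∧ i = 2 * l + 2) ∨ (i = 1 ∧ j = 1) ∨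
    (2 ≤ i ∧ i ≤ l + 1 ∧ j = l + i) ∨ (2 ≤ j ∧ j ≤ l + 1 ∧ i = l + j)

def CurvatureSupport (l i₁ i₂ i₃ i₄ : ℕ) : Prop :=
  ∃ w₁ w₂ : ℕ,
    ((i₁ = 0 ∧ i₂ = w₁) ∨ (i₂ = 0 ∧ i₁ = w₁)) ∧
    ((i₃ = 0 ∧ i₄ = w₂) ∨ (i₄ = 0 ∧ i₃ = w₂)) ∧
    ((w₁ = 2 ∧ w₂ = 2) ∨ (w₁ = 2 ∧ w₂ = 1) ∨ (w₁ = 1 ∧ w₂ = 2) ∨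
     ∃ a : ℕ, 2 ≤ a ∧ a ≤ l ∧
       ((w₁ = a + 1 ∧ w₂ = a + 1) ∨ (w₁ = a + 1 ∧ w₂ = a) ∨ (w₁ = a ∧ w₂ = a + 1) ∨
        (w₁ = a + 1 ∧ w₂ = l + a) ∨ (w₁ = l + a ∧ w₂ = a + 1)))

theorem CurvatureSupport.right_eq_zero {l i₁ i₂ i₃ i₄ : ℕ} (h : CurvatureSupport l i₁ i₂ i₃ i₄) :
    i₃ = 0 ∨ i₄ = 0 := by
  obtain ⟨w₁, w₂, -, h₂, -⟩ := h
  omega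

theorem CurvatureSupport.le_two_mul {l i₁ i₂ i₃ i₄ : ℕ} (hl : 1 ≤ l)
    (h : CurvatureSupport l i₁ i₂ i₃ i₄) :
    i₁ ≤ 2 * l ∧ i₂ ≤ 2 * l ∧ i₃ ≤ 2 * l ∧ i₄ ≤ 2 * l := by
  obtain ⟨w₁, w₂, h₁, h₂, hw | hw | hw | ⟨a, ha, ha', hw⟩⟩ := h <;> omega

theorem CurvatureSupport.eq_of_X_Ulast_X {l i : ℕ} (hl : 1 ≤ l)
    (h : CurvatureSupport l 0 (l + 1) i 0) :
    i = l ∨ i = l + 1 ∨ i = l + l := by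
  obtain ⟨w₁, w₂, h₁, h₂, hw | hw | hw | ⟨a, ha, ha', hw⟩⟩ := h <;> omega

variable {V : Type*} [AddCommGroup V] [Module ℝ V]

/-- The example in the basis `X = b 0`, `T = b 1`, `U_a = b a`, `V_a = b (l + a)` (`2 ≤ a ≤ l + 1`),
`Y = b (2l + 2)`; in field names `Ulast = U_{l+1}`, `Upred = U_l`, `Vpred = V_l`. -/
structure IsModel (l : ℕ) (b : Module.Basis (Fin (2 * l + 3)) ℝ V) (c : ℝ)
    (g : LinearMap.BilinForm ℝ V) (R : MultilinearMap ℝ (fun _ : Fin 4 => V) ℝ) : Prop where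
  g_symm : ∀ v w, g v w = g w v
  g_X_X : g (b ⟨0, by omega⟩) (b ⟨0, by omega⟩) = c
  g_X_Y : g (b ⟨0, by omega⟩) (b (Fin.last (2 * l + 2))) = 1
  g_T_T : g (b ⟨1, by omega⟩) (b ⟨1, by omega⟩) = 1
  g_U_V : ∀ (a : ℕ) (_ : 2 ≤ a) (_ : a ≤ l + 1), g (b ⟨a, by omega⟩) (b ⟨l + a, by omega⟩) = 1
  g_eq_zero : ∀ i j : Fin (2 * l + 3), ¬GramSupport l i j → g (b i) (b j) = 0
  R_swap : ∀ x₁ x₂ x₃ x₄, R ![x₁, x₂, x₃, x₄] = -R ![x₁, x₂, x₄, x₃]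
  R_X_Ulast_Ulast_X :
    R ![b ⟨0, by omega⟩, b ⟨l + 1, by omega⟩, b ⟨l + 1, by omega⟩, b ⟨0, by omega⟩] = 1
  R_X_Ulast_Upred_X :
    R ![b ⟨0, by omega⟩, b ⟨l + 1, by omega⟩, b ⟨l, by omega⟩, b ⟨0, by omega⟩] = 1
  R_X_Ulast_Vpred_X :
    R ![b ⟨0, by omega⟩, b ⟨l + 1, by omega⟩, b ⟨l + l, by omega⟩, b ⟨0, by omega⟩] = 1
  R_eq_zero : ∀ i₁ i₂ i₃ i₄ : Fin (2 * l + 3),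
    ¬CurvatureSupport l i₁ i₂ i₃ i₄ → R ![b i₁, b i₂, b i₃, b i₄] = 0
  two_le : 2 ≤ l

namespace IsModel

variable {l : ℕ} {b : Module.Basis (Fin (2 * l + 3)) ℝ V} {c : ℝ} {g : LinearMap.BilinForm ℝ V}
  {R : MultilinearMap ℝ (fun _ : Fin 4 => V) ℝ}

theorem g_apply_basis (h : IsModel l b c g R) (w : V) {i j : Fin (2 * l + 3)}
    (hij : ∀ k : Fin (2 * l + 3), GramSupport l k j → k = i) :
    g w (b j) = b.repr w i * g (b i) (b j) := by
  rw [g.apply_basis_eq_sum_of_orthogonal b {i}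
      (fun k hk => h.g_eq_zero _ _ fun hs => hk (Finset.mem_singleton.mpr (hij k hs))),
    Finset.sum_singleton]

theorem g_apply_Y (h : IsModel l b c g R) (w : V) :
    g w (b (Fin.last (2 * l + 2))) = b.repr w ⟨0, by omega⟩ := by
  rw [h.g_apply_basis w fun k hk => Fin.ext ?_, h.g_X_Y, mul_one]
  simp only [GramSupport, Fin.val_last] at hk ⊢
  omega

theorem g_apply_T (h : IsModel l b c g R) (w : V) :
    g w (b ⟨1, by omega⟩) = b.repr w ⟨1, by omega⟩ := by
  rw [h.g_apply_basis w fun k hk => Fin.ext ?_, h.g_T_T, mul_one]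
  simp only [GramSupport] at hk ⊢
  omega

theorem g_apply_V (h : IsModel l b c g R) (w : V) {a : ℕ} (ha : 2 ≤ a) (ha' : a ≤ l + 1) :
    g w (b ⟨l + a, by omega⟩) = b.repr w ⟨a, by omega⟩ := by
  rw [h.g_apply_basis w fun k hk => Fin.ext ?_, h.g_U_V a ha ha', mul_one]
  simp only [GramSupport] at hk ⊢
  omega

theorem g_apply_U (h : IsModel l b c g R) (w : V) {a : ℕ} (ha : 2 ≤ a) (ha' : a ≤ l + 1) :
    g w (b ⟨a, by omega⟩) = b.repr w ⟨l + a, by omega⟩ := by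
  rw [h.g_apply_basis w fun k hk => Fin.ext ?_, h.g_symm, h.g_U_V a ha ha', mul_one]
  simp only [GramSupport] at hk ⊢
  omega

theorem g_apply_X (h : IsModel l b c g R) (w : V) :
    g w (b ⟨0, by omega⟩) = c * b.repr w ⟨0, by omega⟩ + b.repr w (Fin.last (2 * l + 2)) := by
  rw [g.apply_basis_eq_sum_of_orthogonal b {⟨0, by omega⟩, Fin.last (2 * l + 2)}
      (fun k hk => h.g_eq_zero _ _ ?_),
    Finset.sum_pair (by simp [Fin.ext_iff]), h.g_X_X, h.g_symm, h.g_X_Y]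
  · ring
  simp only [Finset.mem_insert, Finset.mem_singleton, Fin.ext_iff, Fin.val_last] at hk
  simp only [GramSupport]
  omega

theorem separatingLeft (h : IsModel l b c g R) : g.SeparatingLeft := by
  intro w hw
  have h0 : b.repr w ⟨0, by omega⟩ = 0 := (h.g_apply_Y w).symm.trans (hw _)
  refine b.ext_elem fun ⟨k, hk⟩ => ?_
  rw [map_zero, Finsupp.zero_apply]
  obtain rfl | rfl | ⟨h₂, h₃⟩ | ⟨h₂, h₃⟩ | rfl :
      k = 0 ∨ k = 1 ∨ (2 ≤ k ∧ k ≤ l + 1) ∨ (l + 2 ≤ k ∧ k ≤ 2 * l + 1) ∨ k = 2 * l + 2 := by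
    omega
  · exact h0
  · exact (h.g_apply_T w).symm.trans (hw _)
  · exact (h.g_apply_V w h₂ h₃).symm.trans (hw _)
  · obtain ⟨a, rfl⟩ : ∃ a, k = l + a := ⟨k - l, by omega⟩
    exact (h.g_apply_U w (by omega) (by omega)).symm.trans (hw _)
  · have hX := hw (b ⟨0, by omega⟩)
    rwa [h.g_apply_X, h0, mul_zero, zero_add] at hX

theorem R_eq_zero_of_not_curvatureSupport (h : IsModel l b c g R) (x : Fin 4 → V)
    (hx : ∀ p : Fin 4 → Fin (2 * l + 3), (∀ i, b.repr (x i) (p i) ≠ 0) →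
      ¬CurvatureSupport l (p 0) (p 1) (p 2) (p 3)) : R x = 0 :=
  R.eq_zero_of_forall_basis b x fun p hp => by
    rw [show (fun i => b (p i)) = ![b (p 0), b (p 1), b (p 2), b (p 3)] by
      ext i; fin_cases i <;> rfl]
    exact h.R_eq_zero _ _ _ _ (hx p hp)

theorem R_apply_Y (h : IsModel l b c g R) (x₁ x₂ x₃ : V) :
    R ![x₁, x₂, x₃, b (Fin.last (2 * l + 2))] = 0 :=
  h.R_eq_zero_of_not_curvatureSupport _ fun p hp hs => by
    have h₃ : (p 3 : ℕ) = 2 * l + 2 := by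
      simpa [Finsupp.single_apply, Fin.ext_iff, eq_comm] using hp 3
    have := hs.le_two_mul (one_le_two.trans h.two_le)
    omega

theorem R_eq_zero_of_repr_eq_zero (h : IsModel l b c g R) (x₁ x₂ : V) {u v : V}
    (hu : b.repr u ⟨0, by omega⟩ = 0) (hv : b.repr v ⟨0, by omega⟩ = 0) : R ![x₁, x₂, u, v] = 0 :=
  h.R_eq_zero_of_not_curvatureSupport _ fun p hp hs => by
    have h₂ : (p 2 : ℕ) ≠ 0 := fun h₀ => hp 2 (by simpa [show p 2 = ⟨0, by omega⟩ from Fin.ext h₀])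
    have h₃ : (p 3 : ℕ) ≠ 0 := fun h₀ => hp 3 (by simpa [show p 3 = ⟨0, by omega⟩ from Fin.ext h₀])
    have := hs.right_eq_zero
    omega

theorem pow_three_eq_zero (h : IsModel l b c g R) (f₁ f₂ : V) (A : Module.End ℝ V)
    (hA : ∀ y z, g (A y) z = R ![f₁, f₂, y, z]) : A ^ 3 = 0 := by
  refine LinearMap.IsSkewAdjoint.pow_three_eq_zero h.separatingLeft ?_ (b.coord ⟨0, by omega⟩)
    (X := b ⟨0, by omega⟩) ?_ (fun y => ?_) (fun u v hu hv => ?_)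
  · intro y z
    rw [Pi.neg_apply, map_neg, h.g_symm y, hA, hA, h.R_swap]
  · simp [b.coord_apply]
  · rw [b.coord_apply, ← h.g_apply_Y, hA, h.R_apply_Y]
  · rw [hA]
    exact h.R_eq_zero_of_repr_eq_zero _ _ hu hv

theorem R_add_smul_Y_add_smul_V (h : IsModel l b c g R) (x₃ x₄ : V) (s t : ℝ) :
    R ![b ⟨0, by omega⟩ + s • b (Fin.last (2 * l + 2)),
        b ⟨l + 1, by omega⟩ + t • b ⟨l + (l + 1), by omega⟩, x₃, x₄] =
      R ![b ⟨0, by omega⟩, b ⟨l + 1, by omega⟩, x₃, x₄] := by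
  have hY : ∀ x₂, R ![b (Fin.last (2 * l + 2)), x₂, x₃, x₄] = 0 := fun x₂ =>
    h.R_eq_zero_of_not_curvatureSupport _ fun p hp hs => by
      have h₀ : (p 0 : ℕ) = 2 * l + 2 := by
        simpa [Finsupp.single_apply, Fin.ext_iff, eq_comm] using hp 0
      have := hs.le_two_mul (one_le_two.trans h.two_le)
      omega
  have hV : ∀ x₁, R ![x₁, b ⟨l + (l + 1), by omega⟩, x₃, x₄] = 0 := fun x₁ =>
    h.R_eq_zero_of_not_curvatureSupport _ fun p hp hs => by
      have h₁ : (p 1 : ℕ) = l + (l + 1) := by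
        simpa [Finsupp.single_apply, Fin.ext_iff, eq_comm] using hp 1
      have := hs.le_two_mul (one_le_two.trans h.two_le)
      omega
  rw [R.map_vec4_add_smul_add_smul, hV, hY, hV]
  ring

theorem R_X_Ulast_basis_X (h : IsModel l b c g R) (i : Fin (2 * l + 3)) :
    R ![b ⟨0, by omega⟩, b ⟨l + 1, by omega⟩, b i, b ⟨0, by omega⟩] =
      if (i : ℕ) = l ∨ (i : ℕ) = l + 1 ∨ (i : ℕ) = l + l then 1 else 0 := by
  have hl := h.two_le
  split_ifs with hi
  · rcases hi with hi | hi | hi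
    · rw [show i = ⟨l, by omega⟩ from Fin.ext hi]
      exact h.R_X_Ulast_Upred_X
    · rw [show i = ⟨l + 1, by omega⟩ from Fin.ext hi]
      exact h.R_X_Ulast_Ulast_X
    · rw [show i = ⟨l + l, by omega⟩ from Fin.ext hi]
      exact h.R_X_Ulast_Vpred_X
  · exact h.R_eq_zero _ _ _ _ fun hs => hi (hs.eq_of_X_Ulast_X (by omega))

theorem R_X_Ulast_apply_X (h : IsModel l b c g R) (z : V) :
    R ![b ⟨0, by omega⟩, b ⟨l + 1, by omega⟩, z, b ⟨0, by omega⟩] =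
      b.repr z ⟨l, by omega⟩ + b.repr z ⟨l + 1, by omega⟩ + b.repr z ⟨l + l, by omega⟩ := by
  have hl := h.two_le
  have update : ∀ x₁ x₂ x₃ x₄ : V, Function.update ![x₁, x₂, x₄, x₄] 2 x₃ = ![x₁, x₂, x₃, x₄] :=
    fun _ _ _ _ => by ext i; fin_cases i <;> rfl
  have key :
      R.toLinearMap ![b ⟨0, by omega⟩, b ⟨l + 1, by omega⟩, b ⟨0, by omega⟩, b ⟨0, by omega⟩] 2 =
      b.coord ⟨l, by omega⟩ + b.coord ⟨l + 1, by omega⟩ + b.coord ⟨l + l, by omega⟩ :=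
    b.ext fun i => by
      rw [R.toLinearMap_apply, update, h.R_X_Ulast_basis_X]
      simp only [LinearMap.add_apply, b.coord_apply, b.repr_self, Finsupp.single_apply, Fin.ext_iff]
      split_ifs <;> norm_num <;> omega
  simpa [update] using LinearMap.congr_fun key z

theorem g_apply_sq_X (h : IsModel l b c g R) (s t : ℝ) (A : Module.End ℝ V)
    (hA : ∀ y z, g (A y) z = R ![b ⟨0, by omega⟩ + s • b (Fin.last (2 * l + 2)),
      b ⟨l + 1, by omega⟩ + t • b ⟨l + (l + 1), by omega⟩, y, z]) :
    g (A (A (b ⟨0, by omega⟩))) (b ⟨0, by omega⟩) = -2 := by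
  have hl := h.two_le
  have hAX : ∀ i, g (A (b ⟨0, by omega⟩)) (b i) =
      -if (i : ℕ) = l ∨ (i : ℕ) = l + 1 ∨ (i : ℕ) = l + l then 1 else 0 := fun i => by
    rw [hA, h.R_add_smul_Y_add_smul_V, h.R_swap, h.R_X_Ulast_basis_X]
  rw [hA, h.R_add_smul_Y_add_smul_V, h.R_X_Ulast_apply_X,
    ← h.g_apply_V _ (a := l) (by omega) (by omega),
    ← h.g_apply_V _ (a := l + 1) (by omega) (by omega),
    ← h.g_apply_U _ (a := l) (by omega) (by omega), hAX, hAX, hAX]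
  dsimp only
  rw [if_pos (by omega), if_neg (by omega), if_pos (by omega)]
  norm_num

theorem exists_pow_two_ne_zero (h : IsModel l b c g R) :
    ∃ f₁ f₂ : V, (g f₁ f₁ = 1 ∨ g f₁ f₁ = -1) ∧ (g f₂ f₂ = 1 ∨ g f₂ f₂ = -1) ∧ g f₁ f₂ = 0 ∧
      ∀ A : Module.End ℝ V, (∀ y z, g (A y) z = R ![f₁, f₂, y, z]) → A ^ 2 ≠ 0 := by
  have hl := h.two_le
  refine ⟨b ⟨0, by omega⟩ + ((1 - c) / 2) • b (Fin.last (2 * l + 2)),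
    b ⟨l + 1, by omega⟩ + (1 / 2 : ℝ) • b ⟨l + (l + 1), by omega⟩, Or.inl ?_, Or.inl ?_, ?_,
    fun A hA hA₂ => ?_⟩
  rotate_right
  · have hsq := h.g_apply_sq_X _ _ A hA
    rw [← Module.End.mul_apply, ← pow_two, hA₂, LinearMap.zero_apply, map_zero,
      LinearMap.zero_apply] at hsq
    norm_num at hsq
  all_goals
    simp only [map_add, map_smul, LinearMap.add_apply, LinearMap.smul_apply, smul_eq_mul,
      h.g_apply_X, h.g_apply_Y, fun w => h.g_apply_U w (a := l + 1) (by omega) le_rfl,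
      fun w => h.g_apply_V w (a := l + 1) (by omega) le_rfl, b.repr_self, Finsupp.single_apply,
      Fin.ext_iff, Fin.val_last]
    split_ifs <;> first | contradiction | omega | ring

end IsModel

end IvanovPetrova

/-- the odd-dimensional Ivanov-Petrova example. On `ℝ^{2ℓ+3}` with basis
`X = b 0`, `T = b 1`, `U_a = b a` (`2 ≤ a ≤ ℓ+1`), `V_a = b (ℓ+a)` (`2 ≤ a ≤ ℓ+1`),
`Y = b (2ℓ+2)`, take `g(X,X) = c`, `g(X,Y) = 1`, `g(T,T) = 1`, `g(U_a,V_b) = δ_{ab}`, all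
other products `0`, and the 4-linear form `R` whose only nonzero components up to the
usual symmetries are `R(X,U₂,U₂,X) = R(X,T,U₂,X) = 1` and, for `2 ≤ a ≤ ℓ`,
`R(X,U_{a+1},U_{a+1},X) = R(X,U_{a+1},U_a,X) = R(X,U_{a+1},V_a,X) = 1`. Then the
skew-symmetric curvature operator satisfies `ℛ(f₁,f₂)³ = 0` for every orthonormal pair
`(f₁,f₂)`, and `ℛ(f₁,f₂)² ≠ 0` for some such pair. -/
theorem ip_nilpotent_order_three_odd_dim (l : ℕ) (hl : 2 ≤ l)
    (b : Module.Basis (Fin (2 * l + 3)) ℝ (Fin (2 * l + 3) → ℝ)) (c : ℝ)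
    (g : (Fin (2 * l + 3) → ℝ) →ₗ[ℝ] (Fin (2 * l + 3) → ℝ) →ₗ[ℝ] ℝ)
    (hgsym : ∀ v w, g v w = g w v)
    (hgXX : g (b ⟨0, by omega⟩) (b ⟨0, by omega⟩) = c)
    (hgXY : g (b ⟨0, by omega⟩) (b ⟨2 * l + 2, by omega⟩) = 1)
    (hgTT : g (b ⟨1, by omega⟩) (b ⟨1, by omega⟩) = 1)
    (hgUV : ∀ (a a' : ℕ) (ha : 2 ≤ a) (ha' : a ≤ l + 1) (hb : 2 ≤ a') (hb' : a' ≤ l + 1),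
      g (b ⟨a, by omega⟩) (b ⟨l + a', by omega⟩) = if a = a' then 1 else 0)
    (hg0 : ∀ i j : Fin (2 * l + 3),
      ¬((i.1 = 0 ∧ j.1 = 0) ∨ (i.1 = 0 ∧ j.1 = 2 * l + 2) ∨ (j.1 = 0 ∧ i.1 = 2 * l + 2) ∨
        (i.1 = 1 ∧ j.1 = 1) ∨
        (2 ≤ i.1 ∧ i.1 ≤ l + 1 ∧ j.1 = l + i.1) ∨
        (2 ≤ j.1 ∧ j.1 ≤ l + 1 ∧ i.1 = l + j.1)) →
      g (b i) (b j) = 0)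
    (R : MultilinearMap ℝ (fun _ : Fin 4 => (Fin (2 * l + 3) → ℝ)) ℝ)
    (hsym2 : ∀ x₁ x₂ x₃ x₄, R ![x₁, x₂, x₃, x₄] = -R ![x₁, x₂, x₄, x₃])
    (hval3 : ∀ (a : ℕ) (ha : 2 ≤ a) (ha' : a ≤ l),
      R ![b ⟨0, by omega⟩, b ⟨a + 1, by omega⟩, b ⟨a + 1, by omega⟩, b ⟨0, by omega⟩] = 1)
    (hval4 : ∀ (a : ℕ) (ha : 2 ≤ a) (ha' : a ≤ l),
      R ![b ⟨0, by omega⟩, b ⟨a + 1, by omega⟩, b ⟨a, by omega⟩, b ⟨0, by omega⟩] = 1)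
    (hval5 : ∀ (a : ℕ) (ha : 2 ≤ a) (ha' : a ≤ l),
      R ![b ⟨0, by omega⟩, b ⟨a + 1, by omega⟩, b ⟨l + a, by omega⟩, b ⟨0, by omega⟩] = 1)
    (hvanish : ∀ i₁ i₂ i₃ i₄ : Fin (2 * l + 3),
      ¬(∃ w₁ w₂ : ℕ,
        ((i₁.1 = 0 ∧ i₂.1 = w₁) ∨ (i₂.1 = 0 ∧ i₁.1 = w₁)) ∧
        ((i₃.1 = 0 ∧ i₄.1 = w₂) ∨ (i₄.1 = 0 ∧ i₃.1 = w₂)) ∧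
        ((w₁ = 2 ∧ w₂ = 2) ∨ (w₁ = 2 ∧ w₂ = 1) ∨ (w₁ = 1 ∧ w₂ = 2) ∨
         ∃ a : ℕ, 2 ≤ a ∧ a ≤ l ∧
           ((w₁ = a + 1 ∧ w₂ = a + 1) ∨ (w₁ = a + 1 ∧ w₂ = a) ∨ (w₁ = a ∧ w₂ = a + 1) ∨
            (w₁ = a + 1 ∧ w₂ = l + a) ∨ (w₁ = l + a ∧ w₂ = a + 1)))) →
      R ![b i₁, b i₂, b i₃, b i₄] = 0) :
    (∀ f₁ f₂ : Fin (2 * l + 3) → ℝ,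
      (g f₁ f₁ = 1 ∨ g f₁ f₁ = -1) → (g f₂ f₂ = 1 ∨ g f₂ f₂ = -1) → g f₁ f₂ = 0 →
      ∀ Rop : Module.End ℝ (Fin (2 * l + 3) → ℝ),
        (∀ y z, g (Rop y) z = R ![f₁, f₂, y, z]) → Rop ^ 3 = 0) ∧
    (∃ f₁ f₂ : Fin (2 * l + 3) → ℝ,
      (g f₁ f₁ = 1 ∨ g f₁ f₁ = -1) ∧ (g f₂ f₂ = 1 ∨ g f₂ f₂ = -1) ∧ g f₁ f₂ = 0 ∧
      ∀ Rop : Module.End ℝ (Fin (2 * l + 3) → ℝ),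
        (∀ y z, g (Rop y) z = R ![f₁, f₂, y, z]) → Rop ^ 2 ≠ 0) := by
  have h : IvanovPetrova.IsModel l b c g R :=
    ⟨hgsym, hgXX, hgXY, hgTT, fun a ha ha' => (hgUV a a ha ha' ha ha').trans (if_pos rfl), hg0,
      hsym2, hval3 l hl le_rfl, hval4 l hl le_rfl, hval5 l hl le_rfl, hvanish, hl⟩
  exact ⟨fun f₁ f₂ _ _ _ A hA => h.pow_three_eq_zero f₁ f₂ A hA, h.exists_pow_two_ne_zero⟩
end

section
/- Let ℓ ≥ 1, let {X, U_1,…,U_{ℓ+1}, V_1,…,V_{ℓ+1}, Y} be a basis of ℝ^{2ℓ+4}, and let c ∈ ℝ. Let g be the symmetric bilinear form with g(X,X) = c, g(X,Y) = 1, g(U_a,V_b) = δ_{ab}, all other products 0, and let R be the 4-linear form whose only nonzero components, up to the symmetries R(x_1,x_2,x_3,x_4) = −R(x_2,x_1,x_3,x_4) = −R(x_1,x_2,x_4,x_3) = R(x_3,x_4,x_1,x_2), are R(X,U_1,U_1,X) = 1 and, for 2 ≤ a ≤ ℓ+1, R(X,U_a,U_a,X) = R(X,U_a,U_{a−1},X)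 = R(X,U_a,V_{a−1},X) = 1. Then for every pair f_1, f_2 with g(f_1,f_1) = ±1, g(f_2,f_2) = ±1 and g(f_1,f_2) = 0, the skew-symmetric curvature operator satisfies ℛ(f_1,f_2)³ = 0; moreover there exists such a pair with ℛ(f_1,f_2)² ≠ 0. -/
/-!
Every nonzero component of `R` has `X` in exactly one of the first two and one of the last two
slots. Hence for any `f₁, f₂` the operator `A = ℛ(f₁, f₂)` satisfies
`g(A y, z) = κ(y) ξ(z) - ξ(y) κ(z)` with `ξ` the `X`-coordinate, which is `g(·, Y)`, and
`κ = R(f₁, f₂, ·, X)`. Since `Y` is null and `κ(Y) = 0`, `ξ ∘ A = 0`, and skew-symmetry gives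
`g(A³ y, z) = -g(A² y, A z) = 0`, so `A³ = 0` by nondegeneracy of `g`. For
`f₁ = X + ((1 - c)/2) Y` and `f₂ = U_{ℓ+1} + V_{ℓ+1}/2`, `κ` is `g`-dual to
`q = U_ℓ + V_ℓ + V_{ℓ+1}` and `g(A² X, X) = -g(q, q) = -2`.
-/

namespace MultilinearMap

variable {K V : Type*} [CommRing K] [AddCommGroup V] [Module K V]

def bilinFstSnd (R : MultilinearMap K (fun _ : Fin 4 => V) K) (y z : V) :
    V →ₗ[K] V →ₗ[K] K :=
  LinearMap.mk₂ K (fun f₁ f₂ => R ![f₁, f₂, y, z])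
    (fun x x' _ => R.cons_add _ x x') (fun r x _ => R.cons_smul _ r x)
    (fun f x x' => (R.curryLeft f).cons_add _ x x')
    (fun r f x => (R.curryLeft f).cons_smul _ r x)

@[simp]
theorem bilinFstSnd_apply (R : MultilinearMap K (fun _ : Fin 4 => V) K) (y z f₁ f₂ : V) :
    R.bilinFstSnd y z f₁ f₂ = R ![f₁, f₂, y, z] := rfl

theorem apply_eq_zero_of_basis_fst_snd {ι : Type*} (b : Module.Basis ι K V)
    (R : MultilinearMap K (fun _ : Fin 4 => V) K) {y z : V}
    (h : ∀ i j, R ![b i, b j, y, z] = 0) (f₁ f₂ : V) : R ![f₁, f₂, y, z] = 0 := by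
  have : R.bilinFstSnd y z = 0 := LinearMap.ext_basis b b fun i j => h i j
  exact LinearMap.congr_fun₂ this f₁ f₂

end MultilinearMap

namespace LinearMap

variable {K V : Type*} [CommRing K] [AddCommGroup V] [Module K V]

theorem IsAlt.apply_eq_of_apply_basis_eq_zero {ι : Type*} [DecidableEq ι]
    (b : Module.Basis ι K V) {B : V →ₗ[K] V →ₗ[K] K} (hB : B.IsAlt) (i₀ : ι)
    (h : ∀ i j, i ≠ i₀ → j ≠ i₀ → B (b i) (b j) = 0) (y z : V) :
    B y z = B y (b i₀) * b.coord i₀ z - b.coord i₀ y * B z (b i₀) := by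
  have : B = (LinearMap.mul K K).compl₁₂ (B.flip (b i₀)) (b.coord i₀) -
      (LinearMap.mul K K).compl₁₂ (b.coord i₀) (B.flip (b i₀)) := by
    refine LinearMap.ext_basis b b fun i j => ?_
    by_cases hi : i = i₀ <;> by_cases hj : j = i₀
    · subst hi hj; simp [hB.self_eq_zero]
    · subst hi; simp [Ne.symm hj, hB.self_eq_zero, hB.neg]
    · subst hj; simp [Ne.symm hi]
    · simp [Ne.symm hi, Ne.symm hj, h i j hi hj]
  exact LinearMap.congr_fun₂ this y z

theorem separatingLeft_of_dual_s19 {ι : Type*} [DecidableEq ι] (b : Module.Basis ι K V)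
    (g : V →ₗ[K] V →ₗ[K] K) (d : ι → V) (hd : ∀ i j, g (b i) (d j) = if i = j then 1 else 0) :
    g.SeparatingLeft := by
  intro v hv
  have hcoord : ∀ j, g.flip (d j) = b.coord j := fun j =>
    b.ext fun i => by simp [hd, Finsupp.single_apply]
  exact b.forall_coord_eq_zero_iff.mp fun j => by
    rw [← hcoord j, flip_apply, hv]

end LinearMap

namespace Module.End

variable {K V : Type*} [CommRing K] [AddCommGroup V] [Module K V]

/-- `g (A y) z = κ y * ξ z - ξ y * κ z` with `κ = g (A ·) X`: for symmetric nondegenerate `g`,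
`A` is the skew operator `κ ∧ ξ` of rank at most two. -/
def IsWedge (g : V →ₗ[K] V →ₗ[K] K) (A : Module.End K V) (ξ : V →ₗ[K] K) (X : V) : Prop :=
  ∀ y z, g (A y) z = g (A y) X * ξ z - ξ y * g (A z) X

namespace IsWedge

variable {g : V →ₗ[K] V →ₗ[K] K} {A : Module.End K V} {ξ : V →ₗ[K] K} {X : V}

theorem comp_eq_zero (hA : IsWedge g A ξ X) {Y : V} (hξ : ∀ v, ξ v = g v Y) (hξY : ξ Y = 0)
    (hAY : g (A Y) X = 0) : ξ ∘ₗ A = 0 := by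
  ext y
  rw [LinearMap.comp_apply, hξ, hA, hξY, hAY, LinearMap.zero_apply]; ring

theorem pow_three_eq_zero (hA : IsWedge g A ξ X) (hg : ∀ v w, g v w = g w v)
    (hsep : g.SeparatingLeft) (hξA : ξ ∘ₗ A = 0) : A ^ 3 = 0 := by
  have hξA' (y : V) : ξ (A y) = 0 := LinearMap.congr_fun hξA y
  have hskew : ∀ y z, g (A y) z = -g (A z) y := fun y z => by rw [hA y z, hA z y]; ring
  ext1 y
  refine hsep _ fun z => ?_
  calc g ((A ^ 3) y) z = -g (A z) (A (A y)) := by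
        rw [pow_succ', Module.End.mul_apply, sq, Module.End.mul_apply, hskew]
    _ = -g (A (A y)) (A z) := by rw [hg]
    _ = 0 := by rw [hA, hξA', hξA']; ring

theorem sq_apply_apply (hA : IsWedge g A ξ X) (hg : ∀ v w, g v w = g w v)
    (hξA : ξ ∘ₗ A = 0) (hX : ξ X = 1) {q : V} (hq : ∀ v, g (A v) X = g q v) :
    g ((A ^ 2) X) X = -g q q := by
  have hAX : g (A X) X = 0 := by rw [hA, hX]; ring
  calc g ((A ^ 2) X) X = g (A X) q := by
        rw [sq, Module.End.mul_apply, hA, show ξ (A X) = 0 from LinearMap.congr_fun hξA X, hX,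
          hq, hg]
        ring
    _ = -g q q := by rw [hA, hAX, hX, hq]; ring

end IsWedge

end Module.End

namespace IvanovPetrova

variable {V : Type*} [AddCommGroup V] [Module ℝ V] {l : ℕ} {c : ℝ}
  {b : Module.Basis (Fin (2 * l + 4)) ℝ V} {g : V →ₗ[ℝ] V →ₗ[ℝ] ℝ}

/-- The Gram matrix of `g` in the basis `X = b 0`, `U_a = b a`, `V_a = b (ℓ + 1 + a)`,
`Y = b (2ℓ + 3)`. -/
def gram (l : ℕ) (c : ℝ) (i j : ℕ) : ℝ :=
  if i = 0 ∧ j = 0 then c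
  else if (i = 0 ∧ j = 2 * l + 3) ∨ (j = 0 ∧ i = 2 * l + 3) ∨
      (1 ≤ i ∧ i ≤ l + 1 ∧ j = l + 1 + i) ∨ (1 ≤ j ∧ j ≤ l + 1 ∧ i = l + 1 + j) then 1
  else 0

theorem apply_basis_eq_gram (hgsym : ∀ v w, g v w = g w v)
    (hgXX : g (b ⟨0, by linarith⟩) (b ⟨0, by linarith⟩) = c)
    (hgXY : g (b ⟨0, by linarith⟩) (b ⟨2 * l + 3, by linarith⟩) = 1)
    (hgUV : ∀ a (_ : 1 ≤ a) (_ : a ≤ l + 1),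
      g (b ⟨a, by linarith⟩) (b ⟨l + 1 + a, by linarith⟩) = 1)
    (hg0 : ∀ i j : Fin (2 * l + 4),
      ¬((i.1 = 0 ∧ j.1 = 0) ∨ (i.1 = 0 ∧ j.1 = 2 * l + 3) ∨ (j.1 = 0 ∧ i.1 = 2 * l + 3) ∨
        (1 ≤ i.1 ∧ i.1 ≤ l + 1 ∧ j.1 = l + 1 + i.1) ∨
        (1 ≤ j.1 ∧ j.1 ≤ l + 1 ∧ i.1 = l + 1 + j.1)) →
      g (b i) (b j) = 0)
    (i j : Fin (2 * l + 4)) : g (b i) (b j) = gram l c i j := by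
  obtain ⟨i, hi⟩ := i
  obtain ⟨j, hj⟩ := j
  unfold gram
  split_ifs with h₀ h₁
  · obtain ⟨rfl, rfl⟩ := h₀; exact hgXX
  · rcases h₁ with ⟨rfl, rfl⟩ | ⟨rfl, rfl⟩ | ⟨h₁, h₂, rfl⟩ | ⟨h₁, h₂, rfl⟩
    · exact hgXY
    · rw [hgsym]; exact hgXY
    · exact hgUV i h₁ h₂
    · rw [hgsym]; exact hgUV j h₁ h₂
  · exact hg0 _ _ (by simp only; tauto)

noncomputable def dual (b : Module.Basis (Fin (2 * l + 4)) ℝ V) (c : ℝ) (i : Fin (2 * l + 4)) :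
    V :=
  if i.1 = 0 then b ⟨2 * l + 3, by linarith⟩
  else if i.1 = 2 * l + 3 then b ⟨0, by linarith⟩ - c • b ⟨2 * l + 3, by linarith⟩
  else if h : i.1 ≤ l + 1 then b ⟨l + 1 + i.1, by linarith⟩
  else b ⟨i.1 - (l + 1), by omega⟩

theorem apply_dual (hgram : ∀ i j, g (b i) (b j) = gram l c i j) (i j : Fin (2 * l + 4)) :
    g (b i) (dual b c j) = if i = j then 1 else 0 := by
  obtain ⟨i, hi⟩ := i
  obtain ⟨j, hj⟩ := j
  simp only [dual, Fin.mk.injEq]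
  split_ifs <;> simp only [map_sub, map_smul, smul_eq_mul, hgram, gram] <;> grind

theorem separatingLeft (hgram : ∀ i j, g (b i) (b j) = gram l c i j) : g.SeparatingLeft :=
  LinearMap.separatingLeft_of_dual_s19 b g (dual b c) (apply_dual hgram)

theorem coord_zero_eq (hgram : ∀ i j, g (b i) (b j) = gram l c i j) (v : V) :
    b.coord ⟨0, by linarith⟩ v = g v (b ⟨2 * l + 3, by linarith⟩) := by
  refine LinearMap.congr_fun (b.ext fun i => ?_) v (g := g.flip (b ⟨2 * l + 3, by linarith⟩))
  obtain ⟨i, hi⟩ := i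
  simp only [Module.Basis.coord_apply, Module.Basis.repr_self, LinearMap.flip_apply, hgram, gram,
    Finsupp.single_apply, Fin.mk.injEq]
  grind

def CurvSupport (l i₁ i₂ i₃ i₄ : ℕ) : Prop :=
  ∃ w₁ w₂ : ℕ,
    ((i₁ = 0 ∧ i₂ = w₁) ∨ (i₂ = 0 ∧ i₁ = w₁)) ∧
    ((i₃ = 0 ∧ i₄ = w₂) ∨ (i₄ = 0 ∧ i₃ = w₂)) ∧
    ((w₁ = 1 ∧ w₂ = 1) ∨
      ∃ a : ℕ, 2 ≤ a ∧ a ≤ l + 1 ∧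
        ((w₁ = a ∧ w₂ = a) ∨ (w₁ = a ∧ w₂ = a - 1) ∨ (w₁ = a - 1 ∧ w₂ = a) ∨
          (w₁ = a ∧ w₂ = l + a) ∨ (w₁ = l + a ∧ w₂ = a)))

variable {R : MultilinearMap ℝ (fun _ : Fin 4 => V) ℝ}

theorem curv_apply_basis_eq_zero
    (hvanish : ∀ i₁ i₂ i₃ i₄ : Fin (2 * l + 4), ¬CurvSupport l i₁ i₂ i₃ i₄ →
      R ![b i₁, b i₂, b i₃, b i₄] = 0)
    (f₁ f₂ : V) {i j : Fin (2 * l + 4)} (hij : i.1 ≠ 0 ∧ j.1 ≠ 0 ∨ 2 * l + 2 ≤ i.1 + j.1) :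
    R ![f₁, f₂, b i, b j] = 0 :=
  R.apply_eq_zero_of_basis_fst_snd b (fun _ _ => hvanish _ _ _ _ <| by
    rintro ⟨w₁, w₂, h₁, h₂, h₃ | ⟨a, h₃, h₄, h₅⟩⟩ <;> omega) f₁ f₂

theorem curvOp_isWedge (hsym2 : ∀ x₁ x₂ x₃ x₄, R ![x₁, x₂, x₃, x₄] = -R ![x₁, x₂, x₄, x₃])
    (hvanish : ∀ i₁ i₂ i₃ i₄ : Fin (2 * l + 4), ¬CurvSupport l i₁ i₂ i₃ i₄ →
      R ![b i₁, b i₂, b i₃, b i₄] = 0)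
    {f₁ f₂ : V} {A : Module.End ℝ V} (hA : ∀ y z, g (A y) z = R ![f₁, f₂, y, z]) :
    A.IsWedge g (b.coord ⟨0, by linarith⟩) (b ⟨0, by linarith⟩) := by
  intro y z
  have hB : (g ∘ₗ A).IsAlt := fun x => by
    simp only [LinearMap.comp_apply, hA]; linarith [hsym2 f₁ f₂ x x]
  simpa only [LinearMap.comp_apply] using hB.apply_eq_of_apply_basis_eq_zero b ⟨0, by linarith⟩
    (fun i j hi hj => by
      simp only [LinearMap.comp_apply, hA]
      exact curv_apply_basis_eq_zero hvanish f₁ f₂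
        (Or.inl ⟨fun h => hi (Fin.ext h), fun h => hj (Fin.ext h)⟩)) y z

theorem coord_zero_comp_curvOp (hgram : ∀ i j, g (b i) (b j) = gram l c i j)
    (hsym2 : ∀ x₁ x₂ x₃ x₄, R ![x₁, x₂, x₃, x₄] = -R ![x₁, x₂, x₄, x₃])
    (hvanish : ∀ i₁ i₂ i₃ i₄ : Fin (2 * l + 4), ¬CurvSupport l i₁ i₂ i₃ i₄ →
      R ![b i₁, b i₂, b i₃, b i₄] = 0)
    {f₁ f₂ : V} {A : Module.End ℝ V} (hA : ∀ y z, g (A y) z = R ![f₁, f₂, y, z]) :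
    b.coord ⟨0, by linarith⟩ ∘ₗ A = 0 :=
  (curvOp_isWedge hsym2 hvanish hA).comp_eq_zero (coord_zero_eq hgram)
    (by simp [Module.Basis.coord_apply])
    (by rw [hA]; exact curv_apply_basis_eq_zero hvanish f₁ f₂ (Or.inr (by simp only; omega)))

noncomputable def e₁ (b : Module.Basis (Fin (2 * l + 4)) ℝ V) (c : ℝ) : V :=
  b ⟨0, by linarith⟩ + ((1 - c) / 2) • b ⟨2 * l + 3, by linarith⟩

noncomputable def e₂ (b : Module.Basis (Fin (2 * l + 4)) ℝ V) : V :=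
  b ⟨l + 1, by linarith⟩ + (1 / 2 : ℝ) • b ⟨2 * l + 2, by linarith⟩

/-- The `g`-dual of `κ = R(e₁, e₂, ·, X)`, see `curvOp_e_apply_zero`. -/
noncomputable def curvDual (b : Module.Basis (Fin (2 * l + 4)) ℝ V) : V :=
  b ⟨l, by linarith⟩ + b ⟨2 * l + 1, by linarith⟩ + b ⟨2 * l + 2, by linarith⟩

theorem e_orthonormal (hgram : ∀ i j, g (b i) (b j) = gram l c i j) :
    g (e₁ b c) (e₁ b c) = 1 ∧ g (e₂ b) (e₂ b) = 1 ∧ g (e₁ b c) (e₂ b) = 0 := by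
  simp only [e₁, e₂, map_add, map_smul, LinearMap.add_apply, LinearMap.smul_apply, smul_eq_mul,
    hgram, gram]
  refine ⟨?_, ?_, ?_⟩ <;> grind

theorem curvDual_apply (hl : 1 ≤ l) (hgram : ∀ i j, g (b i) (b j) = gram l c i j)
    (j : Fin (2 * l + 4)) :
    g (curvDual b) (b j) = if j.1 = l ∨ j.1 = l + 1 ∨ j.1 = 2 * l + 1 then 1 else 0 := by
  simp only [curvDual, map_add, LinearMap.add_apply, hgram, gram]
  grind

theorem curvDual_self (hl : 1 ≤ l) (hgram : ∀ i j, g (b i) (b j) = gram l c i j) :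
    g (curvDual b) (curvDual b) = 2 := by
  conv_lhs => arg 2; rw [curvDual]
  simp only [map_add, curvDual_apply hl hgram]
  grind

theorem curv_e_apply_basis
    (hvanish : ∀ i₁ i₂ i₃ i₄ : Fin (2 * l + 4), ¬CurvSupport l i₁ i₂ i₃ i₄ →
      R ![b i₁, b i₂, b i₃, b i₄] = 0)
    (h₂ : R ![b ⟨0, by linarith⟩, b ⟨l + 1, by linarith⟩, b ⟨l + 1, by linarith⟩,
      b ⟨0, by linarith⟩] = 1)
    (h₃ : R ![b ⟨0, by linarith⟩, b ⟨l + 1, by linarith⟩, b ⟨l, by linarith⟩,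
      b ⟨0, by linarith⟩] = 1)
    (h₄ : R ![b ⟨0, by linarith⟩, b ⟨l + 1, by linarith⟩, b ⟨l + (l + 1), by linarith⟩,
      b ⟨0, by linarith⟩] = 1)
    (j : Fin (2 * l + 4)) :
    R ![e₁ b c, e₂ b, b j, b ⟨0, by linarith⟩] =
      if j.1 = l ∨ j.1 = l + 1 ∨ j.1 = 2 * l + 1 then 1 else 0 := by
  have hvanish' : ∀ i₁ i₂ (h₁ : i₁ < 2 * l + 4) (h₂ : i₂ < 2 * l + 4), ¬CurvSupport l i₁ i₂ j 0 →
      R ![b ⟨i₁, h₁⟩, b ⟨i₂, h₂⟩, b j, b ⟨0, by linarith⟩] = 0 := fun i₁ i₂ h₁ h₂ =>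
    hvanish ⟨i₁, h₁⟩ ⟨i₂, h₂⟩ j ⟨0, by linarith⟩
  have hY : ∀ i (hi : i < 2 * l + 4),
      R ![b ⟨2 * l + 3, by linarith⟩, b ⟨i, hi⟩, b j, b ⟨0, by linarith⟩] = 0 := fun i hi =>
    hvanish' _ _ _ _ (by rintro ⟨w₁, w₂, h₁, h₂, h₃ | ⟨a, h₃, h₄, h₅⟩⟩ <;> omega)
  have hV : R ![b ⟨0, by linarith⟩, b ⟨2 * l + 2, by linarith⟩, b j, b ⟨0, by linarith⟩] = 0 :=
    hvanish' _ _ _ _ (by rintro ⟨w₁, w₂, h₁, h₂, h₃ | ⟨a, h₃, h₄, h₅⟩⟩ <;> omega)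
  rw [e₁, e₂, ← R.bilinFstSnd_apply]
  simp only [map_add, map_smul, LinearMap.add_apply, LinearMap.smul_apply, smul_eq_mul,
    R.bilinFstSnd_apply, hY, hV, mul_zero, add_zero]
  split_ifs with h
  · rcases h with h | h | h
    · rwa [show j = ⟨l, by linarith⟩ from Fin.ext h]
    · rwa [show j = ⟨l + 1, by linarith⟩ from Fin.ext h]
    · rwa [show j = ⟨l + (l + 1), by linarith⟩ from Fin.ext (show j.1 = l + (l + 1) by omega)]
  · exact hvanish' _ _ _ _ (by rintro ⟨w₁, w₂, h₁, h₂, h₃ | ⟨a, h₃, h₄, h₅⟩⟩ <;> omega)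

theorem curvOp_e_apply_zero (hl : 1 ≤ l) (hgram : ∀ i j, g (b i) (b j) = gram l c i j)
    (hvanish : ∀ i₁ i₂ i₃ i₄ : Fin (2 * l + 4), ¬CurvSupport l i₁ i₂ i₃ i₄ →
      R ![b i₁, b i₂, b i₃, b i₄] = 0)
    (h₂ : R ![b ⟨0, by linarith⟩, b ⟨l + 1, by linarith⟩, b ⟨l + 1, by linarith⟩,
      b ⟨0, by linarith⟩] = 1)
    (h₃ : R ![b ⟨0, by linarith⟩, b ⟨l + 1, by linarith⟩, b ⟨l, by linarith⟩,
      b ⟨0, by linarith⟩] = 1)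
    (h₄ : R ![b ⟨0, by linarith⟩, b ⟨l + 1, by linarith⟩, b ⟨l + (l + 1), by linarith⟩,
      b ⟨0, by linarith⟩] = 1)
    {A : Module.End ℝ V} (hA : ∀ y z, g (A y) z = R ![e₁ b c, e₂ b, y, z]) (v : V) :
    g (A v) (b ⟨0, by linarith⟩) = g (curvDual b) v := by
  refine LinearMap.congr_fun (b.ext fun j => ?_) v (f := g.flip (b ⟨0, by linarith⟩) ∘ₗ A)
    (g := g (curvDual b))
  simp only [LinearMap.comp_apply, LinearMap.flip_apply, hA,
    curv_e_apply_basis hvanish h₂ h₃ h₄, curvDual_apply hl hgram]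

end IvanovPetrova

open IvanovPetrova in
/-- the even-dimensional Ivanov-Petrova example. On `ℝ^{2ℓ+4}` with basis
`X = b 0`, `U_a = b a` (`1 ≤ a ≤ ℓ+1`), `V_a = b (ℓ+1+a)` (`1 ≤ a ≤ ℓ+1`), `Y = b (2ℓ+3)`,
take `g(X,X) = c`, `g(X,Y) = 1`, `g(U_a,V_b) = δ_{ab}`, all other products `0`, and the
4-linear form `R` whose only nonzero components up to the usual symmetries are
`R(X,U₁,U₁,X) = 1` and, for `2 ≤ a ≤ ℓ+1`,
`R(X,U_a,U_a,X) = R(X,U_a,U_{a-1},X) = R(X,U_a,V_{a-1},X) = 1`. Then the skew-symmetric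
curvature operator satisfies `ℛ(f₁,f₂)³ = 0` for every orthonormal pair `(f₁,f₂)`, and
`ℛ(f₁,f₂)² ≠ 0` for some such pair. -/
theorem ip_nilpotent_order_three_even_dim (l : ℕ) (hl : 1 ≤ l)
    (b : Module.Basis (Fin (2 * l + 4)) ℝ (Fin (2 * l + 4) → ℝ)) (c : ℝ)
    (g : (Fin (2 * l + 4) → ℝ) →ₗ[ℝ] (Fin (2 * l + 4) → ℝ) →ₗ[ℝ] ℝ)
    (hgsym : ∀ v w, g v w = g w v)
    (hgXX : g (b ⟨0, by omega⟩) (b ⟨0, by omega⟩) = c)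
    (hgXY : g (b ⟨0, by omega⟩) (b ⟨2 * l + 3, by omega⟩) = 1)
    (hgUV : ∀ (a a' : ℕ) (ha : 1 ≤ a) (ha' : a ≤ l + 1) (hb : 1 ≤ a') (hb' : a' ≤ l + 1),
      g (b ⟨a, by omega⟩) (b ⟨l + 1 + a', by omega⟩) = if a = a' then 1 else 0)
    (hg0 : ∀ i j : Fin (2 * l + 4),
      ¬((i.1 = 0 ∧ j.1 = 0) ∨ (i.1 = 0 ∧ j.1 = 2 * l + 3) ∨ (j.1 = 0 ∧ i.1 = 2 * l + 3) ∨
        (1 ≤ i.1 ∧ i.1 ≤ l + 1 ∧ j.1 = l + 1 + i.1) ∨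
        (1 ≤ j.1 ∧ j.1 ≤ l + 1 ∧ i.1 = l + 1 + j.1)) →
      g (b i) (b j) = 0)
    (R : MultilinearMap ℝ (fun _ : Fin 4 => (Fin (2 * l + 4) → ℝ)) ℝ)
    (hsym2 : ∀ x₁ x₂ x₃ x₄, R ![x₁, x₂, x₃, x₄] = -R ![x₁, x₂, x₄, x₃])
    (hval2 : ∀ (a : ℕ) (ha : 2 ≤ a) (ha' : a ≤ l + 1),
      R ![b ⟨0, by omega⟩, b ⟨a, by omega⟩, b ⟨a, by omega⟩, b ⟨0, by omega⟩] = 1)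
    (hval3 : ∀ (a : ℕ) (ha : 2 ≤ a) (ha' : a ≤ l + 1),
      R ![b ⟨0, by omega⟩, b ⟨a, by omega⟩, b ⟨a - 1, by omega⟩, b ⟨0, by omega⟩] = 1)
    (hval4 : ∀ (a : ℕ) (ha : 2 ≤ a) (ha' : a ≤ l + 1),
      R ![b ⟨0, by omega⟩, b ⟨a, by omega⟩, b ⟨l + a, by omega⟩, b ⟨0, by omega⟩] = 1)
    (hvanish : ∀ i₁ i₂ i₃ i₄ : Fin (2 * l + 4),
      ¬(∃ w₁ w₂ : ℕ,
        ((i₁.1 = 0 ∧ i₂.1 = w₁) ∨ (i₂.1 = 0 ∧ i₁.1 = w₁)) ∧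
        ((i₃.1 = 0 ∧ i₄.1 = w₂) ∨ (i₄.1 = 0 ∧ i₃.1 = w₂)) ∧
        ((w₁ = 1 ∧ w₂ = 1) ∨
         ∃ a : ℕ, 2 ≤ a ∧ a ≤ l + 1 ∧
           ((w₁ = a ∧ w₂ = a) ∨ (w₁ = a ∧ w₂ = a - 1) ∨ (w₁ = a - 1 ∧ w₂ = a) ∨
            (w₁ = a ∧ w₂ = l + a) ∨ (w₁ = l + a ∧ w₂ = a)))) →
      R ![b i₁, b i₂, b i₃, b i₄] = 0) :
    (∀ f₁ f₂ : Fin (2 * l + 4) → ℝ,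
      (g f₁ f₁ = 1 ∨ g f₁ f₁ = -1) → (g f₂ f₂ = 1 ∨ g f₂ f₂ = -1) → g f₁ f₂ = 0 →
      ∀ Rop : Module.End ℝ (Fin (2 * l + 4) → ℝ),
        (∀ y z, g (Rop y) z = R ![f₁, f₂, y, z]) → Rop ^ 3 = 0) ∧
    (∃ f₁ f₂ : Fin (2 * l + 4) → ℝ,
      (g f₁ f₁ = 1 ∨ g f₁ f₁ = -1) ∧ (g f₂ f₂ = 1 ∨ g f₂ f₂ = -1) ∧ g f₁ f₂ = 0 ∧
      ∀ Rop : Module.End ℝ (Fin (2 * l + 4) → ℝ),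
        (∀ y z, g (Rop y) z = R ![f₁, f₂, y, z]) → Rop ^ 2 ≠ 0) := by
  have hgram := apply_basis_eq_gram hgsym hgXX hgXY
    (fun a h₁ h₂ => by simpa using hgUV a a h₁ h₂ h₁ h₂) hg0
  refine ⟨fun f₁ f₂ _ _ _ A hA => (curvOp_isWedge hsym2 hvanish hA).pow_three_eq_zero hgsym
    (separatingLeft hgram) (coord_zero_comp_curvOp hgram hsym2 hvanish hA), ?_⟩
  obtain ⟨h₁₁, h₂₂, h₁₂⟩ := e_orthonormal hgram
  refine ⟨e₁ b c, e₂ b, .inl h₁₁, .inl h₂₂, h₁₂, fun A hA hA₂ => ?_⟩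
  have hκ := curvOp_e_apply_zero hl hgram hvanish (hval2 (l + 1) (by omega) le_rfl)
    (hval3 (l + 1) (by omega) le_rfl) (hval4 (l + 1) (by omega) le_rfl) hA
  have h := (curvOp_isWedge hsym2 hvanish hA).sq_apply_apply hgsym
    (coord_zero_comp_curvOp hgram hsym2 hvanish hA) (by simp [Module.Basis.coord_apply]) hκ
  rw [hA₂, curvDual_self hl hgram] at h
  norm_num at h
end
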